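/- Let r, s ∈ 𝕀 be primitive and admissible quaternions with r𝕀 = s𝕀 (equal right ideals of the icosian ring). Then |rr̃| = |ss̃| and the corresponding coincidence site lattices coincide: L ∩ (1/|rr̃|)rLr̃ = L ∩ (1/|ss̃|)sLs̃. -/

import Mathlib

noncomputable section

open Quaternion Classical

/-- √5 as a real number. -/
def sqrt5 : ℝ := Real.sqrt 5

/-- The golden ratio τ = (1+√5)/2. -/
def gold : ℝ := (1 + sqrt5) / 2

/-- membership in K = ℚ(√5) ⊆ ℝ. -/
def inK (x : ℝ) : Prop := ∃ a b : ℚ, x = (a : ℝ) + (b : ℝ) * sqrt5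

/-- The nontrivial field automorphism of K = ℚ(√5) (√5 ↦ -√5), extended by the
identity outside K.  Since `1, √5` are linearly independent over ℚ, the rational
coordinates of an element of K are unique, so this is well defined. -/
noncomputable def conjK (x : ℝ) : ℝ :=
  if h : ∃ a b : ℚ, x = (a : ℝ) + (b : ℝ) * sqrt5 then
    (h.choose : ℝ) - (h.choose_spec.choose : ℝ) * sqrt5
  else x

/-- membership in 𝔬 = ℤ[τ], the ring of integers of ℚ(√5). -/
def inO (x : ℝ) : Prop := ∃ m n : ℤ, x = (m : ℝ) + (n : ℝ) * gold

/-- The twist map (a,b,c,d) ↦ (a',b',d',c') on quaternions. -/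
noncomputable def twist (q : ℍ[ℝ]) : ℍ[ℝ] :=
  ⟨conjK q.re, conjK q.imI, conjK q.imK, conjK q.imJ⟩

/-- reduced norm nr(q) = q q̄ (as a real number). -/
def nr (q : ℍ[ℝ]) : ℝ := (q * star q).re

/-- reduced trace tr(q) = q + q̄ (as a real number). -/
def trq (q : ℍ[ℝ]) : ℝ := (q + star q).re

/-- generators of the icosian ring. -/
def e₁ : ℍ[ℝ] := ⟨1, 0, 0, 0⟩
def e₂ : ℍ[ℝ] := ⟨0, 1, 0, 0⟩
def e₃ : ℍ[ℝ] := ⟨1/2, 1/2, 1/2, 1/2⟩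
def e₄ : ℍ[ℝ] := ⟨(1 - gold)/2, gold/2, 0, 1/2⟩

/-- membership in the icosian ring 𝕀, the 𝔬-span of the four generators. -/
def inI (q : ℍ[ℝ]) : Prop :=
  ∃ c₁ c₂ c₃ c₄ : ℝ, inO c₁ ∧ inO c₂ ∧ inO c₃ ∧ inO c₄ ∧
    q = c₁ • e₁ + c₂ • e₂ + c₃ • e₃ + c₄ • e₄

/-- generators of the copy L of the root lattice A₄. -/
def g₁ : ℍ[ℝ] := ⟨1, 0, 0, 0⟩
def g₂ : ℍ[ℝ] := ⟨-1/2, 1/2, 1/2, 1/2⟩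
def g₃ : ℍ[ℝ] := ⟨0, -1, 0, 0⟩
def g₄ : ℍ[ℝ] := ⟨0, 1/2, (gold - 1)/2, -gold/2⟩

/-- L, the ℤ-span of the four generators, as an additive subgroup of ℍ(ℝ). -/
def Lgrp : AddSubgroup ℍ[ℝ] := AddSubgroup.closure {g₁, g₂, g₃, g₄}

/-- `q` is a primitive icosian. -/
def PrimitiveIcosian (q : ℍ[ℝ]) : Prop :=
  inI q ∧ ∀ α : ℝ, inK α → inI (α • q) → inO α

/-- `q` is admissible with |q q̃| = n. -/
def Admissible (q : ℍ[ℝ]) (n : ℕ) : Prop :=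
  nr q * conjK (nr q) = (n : ℝ) ^ 2

/-- The additive map x ↦ r • (q x q̃) on ℍ(ℝ). -/
noncomputable def rotHom (q : ℍ[ℝ]) (r : ℝ) : ℍ[ℝ] →+ ℍ[ℝ] where
  toFun x := r • (q * x * twist q)
  map_zero' := by simp
  map_add' x y := by
    simp [mul_add, add_mul, smul_add]

/-- Commensurateness of two additive subgroups of ℍ(ℝ). -/
def Commensurate (A B : AddSubgroup ℍ[ℝ]) : Prop :=
  (A ⊓ B).relIndex A ≠ 0 ∧ (A ⊓ B).relIndex B ≠ 0

/-- Image of an additive subgroup under a linear isometry of ℍ(ℝ) ≅ ℝ⁴. -/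
def mapIso (R : ℍ[ℝ] ≃ₗᵢ[ℝ] ℍ[ℝ]) (A : AddSubgroup ℍ[ℝ]) : AddSubgroup ℍ[ℝ] :=
  A.map (R.toLinearEquiv.toLinearMap.toAddMonoidHom)

/-- `R` lies in SO(4,ℝ). -/
def IsRotation (R : ℍ[ℝ] ≃ₗᵢ[ℝ] ℍ[ℝ]) : Prop :=
  LinearMap.det (R.toLinearEquiv.toLinearMap) = 1

/-!
Since `1 ∈ 𝕀`, the equality `r𝕀 = s𝕀` gives `r = s u` and `s = r v` with `u, v ∈ 𝕀`. The reduced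
norm is multiplicative and `nr(u) nr(u)'` is a rational integer, so `|rr̃|² = |ss̃|² nr(u) nr(u)'`:
thus `|ss̃|` divides `|rr̃|`, and by symmetry the two are equal.

On quaternions with coefficients in `K` the twist is an involution reversing products, and `L` is
exactly the set of icosians fixed by it. Hence `x ↦ u x ũ` maps `L` into itself for every icosian
`u`, so `rLr̃ = s(uLũ)s̃ ⊆ sLs̃`; by symmetry the two images of `L` coincide, and so do the two
coincidence site lattices.
-/

lemma Irrational.ratCast_add_mul_injective {x : ℝ} (hx : Irrational x) {a b c d : ℚ}
    (h : (a : ℝ) + b * x = c + d * x) : a = c ∧ b = d := by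
  obtain rfl : b = d := by
    by_contra hbd
    refine (hx.ratCast_mul (sub_ne_zero.mpr hbd)).ne_rat (c - a) ?_
    push_cast
    linear_combination h
  exact ⟨by exact_mod_cast add_right_cancel h, rfl⟩

lemma irrational_sqrt5 : Irrational sqrt5 := by
  simpa [sqrt5] using Nat.prime_five.irrational_sqrt

lemma sqrt5_mul_self : sqrt5 * sqrt5 = 5 := Real.mul_self_sqrt (by norm_num)

lemma gold_mul_self : gold * gold = gold + 1 := by
  rw [← sq]
  exact Real.goldenRatio_sq

lemma conjK_ratCast_add_mul_sqrt5 (a b : ℚ) : conjK (a + b * sqrt5) = a - b * sqrt5 := by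
  have h : ∃ a' b' : ℚ, (a : ℝ) + b * sqrt5 = a' + b' * sqrt5 := ⟨a, b, rfl⟩
  obtain ⟨ha, hb⟩ := irrational_sqrt5.ratCast_add_mul_injective h.choose_spec.choose_spec
  rw [conjK, dif_pos h]
  exact congrArg₂ (fun a b : ℚ => (a : ℝ) - b * sqrt5) ha.symm hb.symm

def ringK : Subring ℝ where
  carrier := {x | inK x}
  mul_mem' := by
    rintro _ _ ⟨a, b, rfl⟩ ⟨c, d, rfl⟩
    exact ⟨a * c + 5 * b * d, a * d + b * c, by
      push_cast; linear_combination (b * d : ℝ) * sqrt5_mul_self⟩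
  one_mem' := ⟨1, 0, by simp⟩
  add_mem' := by
    rintro _ _ ⟨a, b, rfl⟩ ⟨c, d, rfl⟩
    exact ⟨a + c, b + d, by push_cast; ring⟩
  zero_mem' := ⟨0, 0, by simp⟩
  neg_mem' := by
    rintro _ ⟨a, b, rfl⟩
    exact ⟨-a, -b, by push_cast; ring⟩

lemma inv_two_mem_ringK : (2⁻¹ : ℝ) ∈ ringK := ⟨2⁻¹, 0, by simp⟩

lemma gold_mem_ringK : gold ∈ ringK :=
  ⟨1 / 2, 1 / 2, by rw [gold]; push_cast; ring⟩

lemma div_two_mem_ringK {x : ℝ} (hx : x ∈ ringK) : x / 2 ∈ ringK := by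
  rw [div_eq_mul_inv]
  exact mul_mem hx inv_two_mem_ringK

section conjK

variable {x y : ℝ}

lemma conjK_add (hx : x ∈ ringK) (hy : y ∈ ringK) : conjK (x + y) = conjK x + conjK y := by
  obtain ⟨a, b, rfl⟩ := hx
  obtain ⟨c, d, rfl⟩ := hy
  have h : (a : ℝ) + b * sqrt5 + (c + d * sqrt5) = ((a + c : ℚ) : ℝ) + (b + d : ℚ) * sqrt5 := by
    push_cast; ring
  rw [h]
  simp only [conjK_ratCast_add_mul_sqrt5]
  push_cast; ring

lemma conjK_mul (hx : x ∈ ringK) (hy : y ∈ ringK) : conjK (x * y) = conjK x * conjK y := by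
  obtain ⟨a, b, rfl⟩ := hx
  obtain ⟨c, d, rfl⟩ := hy
  have h : ((a : ℝ) + b * sqrt5) * (c + d * sqrt5)
      = ((a * c + 5 * b * d : ℚ) : ℝ) + (a * d + b * c : ℚ) * sqrt5 := by
    push_cast; linear_combination (b * d : ℝ) * sqrt5_mul_self
  rw [h]
  simp only [conjK_ratCast_add_mul_sqrt5]
  push_cast; linear_combination (-b * d : ℝ) * sqrt5_mul_self

lemma conjK_ratCast (a : ℚ) : conjK a = a := by
  simpa using conjK_ratCast_add_mul_sqrt5 a 0

@[simp] lemma conjK_zero : conjK 0 = 0 := by simpa using conjK_ratCast 0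

@[simp] lemma conjK_one : conjK 1 = 1 := by simpa using conjK_ratCast 1

lemma conjK_neg (hx : x ∈ ringK) : conjK (-x) = -conjK x := by
  have h := conjK_ratCast (-1)
  push_cast at h
  rw [neg_eq_neg_one_mul, conjK_mul (neg_mem (one_mem ringK)) hx, h, neg_one_mul]

lemma conjK_sub (hx : x ∈ ringK) (hy : y ∈ ringK) : conjK (x - y) = conjK x - conjK y := by
  rw [sub_eq_add_neg, conjK_add hx (neg_mem hy), conjK_neg hy, sub_eq_add_neg]

@[simp] lemma conjK_inv_two : conjK 2⁻¹ = 2⁻¹ := by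
  simpa using conjK_ratCast 2⁻¹

lemma conjK_div_two (hx : x ∈ ringK) : conjK (x / 2) = conjK x / 2 := by
  rw [div_eq_mul_inv, conjK_mul hx inv_two_mem_ringK, conjK_inv_two, div_eq_mul_inv]

lemma conjK_conjK (hx : x ∈ ringK) : conjK (conjK x) = x := by
  obtain ⟨a, b, rfl⟩ := hx
  rw [conjK_ratCast_add_mul_sqrt5]
  simpa [sub_eq_add_neg] using conjK_ratCast_add_mul_sqrt5 a (-b)

end conjK

lemma conjK_gold : conjK gold = 1 - gold := by
  have h : gold = ((1 / 2 : ℚ) : ℝ) + (1 / 2 : ℚ) * sqrt5 := by rw [gold]; push_cast; ring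
  rw [h, conjK_ratCast_add_mul_sqrt5]
  push_cast; ring

def ringO : Subring ℝ where
  carrier := {x | inO x}
  mul_mem' := by
    rintro _ _ ⟨m, n, rfl⟩ ⟨p, q, rfl⟩
    exact ⟨m * p + n * q, m * q + n * p + n * q, by
      push_cast; linear_combination (n * q : ℝ) * gold_mul_self⟩
  one_mem' := ⟨1, 0, by simp⟩
  add_mem' := by
    rintro _ _ ⟨m, n, rfl⟩ ⟨p, q, rfl⟩
    exact ⟨m + p, n + q, by push_cast; ring⟩
  zero_mem' := ⟨0, 0, by simp⟩
  neg_mem' := by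
    rintro _ ⟨m, n, rfl⟩
    exact ⟨-m, -n, by push_cast; ring⟩

lemma gold_mem_ringO : gold ∈ ringO := ⟨0, 1, by simp⟩

lemma ringO_le_ringK : ringO ≤ ringK := by
  rintro _ ⟨m, n, rfl⟩
  exact add_mem (intCast_mem _ m) (mul_mem (intCast_mem _ n) gold_mem_ringK)

lemma intCast_add_mul_gold_injective {m n m' n' : ℤ}
    (h : (m : ℝ) + n * gold = m' + n' * gold) : m = m' ∧ n = n' := by
  exact_mod_cast Real.goldenRatio_irrational.ratCast_add_mul_injective
    (a := m) (b := n) (c := m') (d := n') (by exact_mod_cast h)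

lemma conjK_intCast (m : ℤ) : conjK m = m := by exact_mod_cast conjK_ratCast m

lemma conjK_intCast_add_mul_gold (m n : ℤ) :
    conjK (m + n * gold) = (m + n : ℤ) + (-n : ℤ) * gold := by
  rw [conjK_add (intCast_mem _ m) (mul_mem (intCast_mem _ n) gold_mem_ringK),
    conjK_mul (intCast_mem _ n) gold_mem_ringK, conjK_intCast, conjK_intCast, conjK_gold]
  push_cast; ring

lemma conjK_mem_ringO {x : ℝ} (hx : x ∈ ringO) : conjK x ∈ ringO := by
  obtain ⟨m, n, rfl⟩ := hx
  exact ⟨_, _, conjK_intCast_add_mul_gold m n⟩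

lemma exists_intCast_eq_mul_conjK {x : ℝ} (hx : x ∈ ringO) : ∃ N : ℤ, x * conjK x = N := by
  obtain ⟨m, n, rfl⟩ := hx
  refine ⟨m * m + m * n - n * n, ?_⟩
  rw [conjK_intCast_add_mul_gold]
  push_cast
  linear_combination (-n * n : ℝ) * gold_mul_self

@[simp] lemma twist_re (q : ℍ[ℝ]) : (twist q).re = conjK q.re := rfl
@[simp] lemma twist_imI (q : ℍ[ℝ]) : (twist q).imI = conjK q.imI := rfl
@[simp] lemma twist_imJ (q : ℍ[ℝ]) : (twist q).imJ = conjK q.imK := rfl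
@[simp] lemma twist_imK (q : ℍ[ℝ]) : (twist q).imK = conjK q.imJ := rfl

def HasCoeffsInK (q : ℍ[ℝ]) : Prop :=
  q.re ∈ ringK ∧ q.imI ∈ ringK ∧ q.imJ ∈ ringK ∧ q.imK ∈ ringK

section twist

variable {p q : ℍ[ℝ]}

lemma twist_zero : twist 0 = 0 := by
  ext <;> simp

lemma twist_add (hp : HasCoeffsInK p) (hq : HasCoeffsInK q) :
    twist (p + q) = twist p + twist q := by
  obtain ⟨hp₁, hp₂, hp₃, hp₄⟩ := hp
  obtain ⟨hq₁, hq₂, hq₃, hq₄⟩ := hq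
  ext <;> simp [conjK_add, *]

lemma twist_neg (hq : HasCoeffsInK q) : twist (-q) = -twist q := by
  obtain ⟨hq₁, hq₂, hq₃, hq₄⟩ := hq
  ext <;> simp [conjK_neg, *]

lemma twist_twist (hq : HasCoeffsInK q) : twist (twist q) = q := by
  obtain ⟨hq₁, hq₂, hq₃, hq₄⟩ := hq
  ext <;> simp [conjK_conjK, *]

lemma twist_mul (hp : HasCoeffsInK p) (hq : HasCoeffsInK q) :
    twist (p * q) = twist q * twist p := by
  obtain ⟨hp₁, hp₂, hp₃, hp₄⟩ := hp
  obtain ⟨hq₁, hq₂, hq₃, hq₄⟩ := hq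
  ext <;>
    simp (maxDischargeDepth := 6) only [twist_re, twist_imI, twist_imJ, twist_imK,
      Quaternion.re_mul, Quaternion.imI_mul, Quaternion.imJ_mul, Quaternion.imK_mul,
      conjK_sub, conjK_add, conjK_mul, add_mem, sub_mem, mul_mem,
      hp₁, hp₂, hp₃, hp₄, hq₁, hq₂, hq₃, hq₄] <;>
    ring

end twist

section combo

variable (c₁ c₂ c₃ c₄ : ℝ)

/- The sums are expanded before `eᵢ` is unfolded: the unfolded literals have type
`ℍ[ℝ,-1,0,-1]`, on which the `Quaternion` simp lemmas no longer fire. -/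

lemma re_combo :
    (c₁ • e₁ + c₂ • e₂ + c₃ • e₃ + c₄ • e₄).re = c₁ + c₃ / 2 + c₄ * (1 - gold) / 2 := by
  simp only [Quaternion.re_add, Quaternion.re_smul, smul_eq_mul]
  simp only [e₁, e₂, e₃, e₄]
  ring

lemma imI_combo : (c₁ • e₁ + c₂ • e₂ + c₃ • e₃ + c₄ • e₄).imI = c₂ + c₃ / 2 + c₄ * gold / 2 := by
  simp only [Quaternion.imI_add, Quaternion.imI_smul, smul_eq_mul]
  simp only [e₁, e₂, e₃, e₄]
  ring

lemma imJ_combo : (c₁ • e₁ + c₂ • e₂ + c₃ • e₃ + c₄ • e₄).imJ = c₃ / 2 := by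
  simp only [Quaternion.imJ_add, Quaternion.imJ_smul, smul_eq_mul]
  simp only [e₁, e₂, e₃, e₄]
  ring

lemma imK_combo : (c₁ • e₁ + c₂ • e₂ + c₃ • e₃ + c₄ • e₄).imK = c₃ / 2 + c₄ / 2 := by
  simp only [Quaternion.imK_add, Quaternion.imK_smul, smul_eq_mul]
  simp only [e₁, e₂, e₃, e₄]
  ring

end combo

lemma combo_injective {c₁ c₂ c₃ c₄ d₁ d₂ d₃ d₄ : ℝ}
    (h : c₁ • e₁ + c₂ • e₂ + c₃ • e₃ + c₄ • e₄ = d₁ • e₁ + d₂ • e₂ + d₃ • e₃ + d₄ • e₄) :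
    c₁ = d₁ ∧ c₂ = d₂ ∧ c₃ = d₃ ∧ c₄ = d₄ := by
  have h₁ := congrArg (·.re) h
  have h₂ := congrArg (·.imI) h
  have h₃ := congrArg (·.imJ) h
  have h₄ := congrArg (·.imK) h
  simp only [re_combo, imI_combo, imJ_combo, imK_combo] at h₁ h₂ h₃ h₄
  obtain rfl : c₃ = d₃ := by linarith
  obtain rfl : c₄ = d₄ := by linarith
  exact ⟨by linarith, by linarith, rfl, rfl⟩

lemma twist_combo {c₁ c₂ c₃ c₄ : ℝ} (h₁ : c₁ ∈ ringK) (h₂ : c₂ ∈ ringK) (h₃ : c₃ ∈ ringK)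
    (h₄ : c₄ ∈ ringK) :
    twist (c₁ • e₁ + c₂ • e₂ + c₃ • e₃ + c₄ • e₄) =
      conjK c₁ • e₁ + conjK c₂ • e₂ + (conjK c₃ + conjK c₄) • e₃ + (-conjK c₄) • e₄ := by
  have hτ := gold_mem_ringK
  ext <;>
    simp (maxDischargeDepth := 6) only [twist_re, twist_imI, twist_imJ, twist_imK,
      re_combo, imI_combo, imJ_combo, imK_combo,
      conjK_add, conjK_sub, conjK_mul, conjK_div_two, conjK_gold, conjK_one,
      add_mem, sub_mem, mul_mem, div_two_mem_ringK, one_mem, h₁, h₂, h₃, h₄, hτ] <;>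
    ring

lemma hasCoeffsInK_of_inI {q : ℍ[ℝ]} (hq : inI q) : HasCoeffsInK q := by
  obtain ⟨c₁, c₂, c₃, c₄, h₁, h₂, h₃, h₄, rfl⟩ := hq
  replace h₁ := ringO_le_ringK h₁
  replace h₂ := ringO_le_ringK h₂
  replace h₃ := ringO_le_ringK h₃
  replace h₄ := ringO_le_ringK h₄
  have hτ := gold_mem_ringK
  refine ⟨?_, ?_, ?_, ?_⟩ <;>
    simp (maxDischargeDepth := 6) only [re_combo, imI_combo, imJ_combo, imK_combo,
      add_mem, sub_mem, mul_mem, div_two_mem_ringK, one_mem, h₁, h₂, h₃, h₄, hτ]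

lemma nr_eq_normSq (q : ℍ[ℝ]) : nr q = normSq q := by
  rw [nr, Quaternion.self_mul_star, Quaternion.re_coe]

lemma nr_mul (p q : ℍ[ℝ]) : nr (p * q) = nr p * nr q := by
  simp only [nr_eq_normSq, map_mul]

section icosian

variable {p q : ℍ[ℝ]}

lemma e₁_eq_one : e₁ = 1 := by
  ext <;> simp [e₁]

lemma inI_zero : inI 0 :=
  ⟨0, 0, 0, 0, zero_mem ringO, zero_mem ringO, zero_mem ringO, zero_mem ringO, by simp⟩

lemma inI_generators : inI e₁ ∧ inI e₂ ∧ inI e₃ ∧ inI e₄ := by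
  have h₀ := zero_mem ringO
  have h₁ := one_mem ringO
  exact ⟨⟨1, 0, 0, 0, h₁, h₀, h₀, h₀, by simp⟩, ⟨0, 1, 0, 0, h₀, h₁, h₀, h₀, by simp⟩,
    ⟨0, 0, 1, 0, h₀, h₀, h₁, h₀, by simp⟩, ⟨0, 0, 0, 1, h₀, h₀, h₀, h₁, by simp⟩⟩

lemma inI_one : inI 1 := e₁_eq_one ▸ inI_generators.1

lemma inI_add (hp : inI p) (hq : inI q) : inI (p + q) := by
  obtain ⟨c₁, c₂, c₃, c₄, h₁, h₂, h₃, h₄, rfl⟩ := hp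
  obtain ⟨d₁, d₂, d₃, d₄, k₁, k₂, k₃, k₄, rfl⟩ := hq
  exact ⟨c₁ + d₁, c₂ + d₂, c₃ + d₃, c₄ + d₄, ringO.add_mem h₁ k₁, ringO.add_mem h₂ k₂,
    ringO.add_mem h₃ k₃, ringO.add_mem h₄ k₄, by module⟩

lemma inI_neg (hq : inI q) : inI (-q) := by
  obtain ⟨c₁, c₂, c₃, c₄, h₁, h₂, h₃, h₄, rfl⟩ := hq
  exact ⟨-c₁, -c₂, -c₃, -c₄, ringO.neg_mem h₁, ringO.neg_mem h₂,
    ringO.neg_mem h₃, ringO.neg_mem h₄, by module⟩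

lemma inI_smul {a : ℝ} (ha : a ∈ ringO) (hq : inI q) : inI (a • q) := by
  obtain ⟨c₁, c₂, c₃, c₄, h₁, h₂, h₃, h₄, rfl⟩ := hq
  exact ⟨a * c₁, a * c₂, a * c₃, a * c₄, mul_mem ha h₁, mul_mem ha h₂, mul_mem ha h₃,
    mul_mem ha h₄, by module⟩

lemma inI_of_eq_intCombo (m₁ n₁ m₂ n₂ m₃ n₃ m₄ n₄ : ℤ)
    (h : q = (m₁ + n₁ * gold) • e₁ + (m₂ + n₂ * gold) • e₂ + (m₃ + n₃ * gold) • e₃ +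
      (m₄ + n₄ * gold) • e₄) : inI q :=
  ⟨_, _, _, _, ⟨m₁, n₁, rfl⟩, ⟨m₂, n₂, rfl⟩, ⟨m₃, n₃, rfl⟩, ⟨m₄, n₄, rfl⟩, h⟩

lemma inI_generator_mul :
    inI (e₂ * e₂) ∧ inI (e₂ * e₃) ∧ inI (e₂ * e₄) ∧
    inI (e₃ * e₂) ∧ inI (e₃ * e₃) ∧ inI (e₃ * e₄) ∧
    inI (e₄ * e₂) ∧ inI (e₄ * e₃) ∧ inI (e₄ * e₄) := by
  refine ⟨inI_of_eq_intCombo (-1) 0 0 0 0 0 0 0 ?_, inI_of_eq_intCombo (-1) 1 1 (-1) (-1) 0 2 0 ?_,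
    inI_of_eq_intCombo 0 0 1 (-1) (-1) 0 1 0 ?_, inI_of_eq_intCombo 0 (-1) 0 1 1 0 (-2) 0 ?_,
    inI_of_eq_intCombo (-1) 0 0 0 1 0 0 0 ?_, inI_of_eq_intCombo (-1) 0 1 0 0 0 1 (-1) ?_,
    inI_of_eq_intCombo 0 (-1) 0 0 1 0 (-1) 0 ?_, inI_of_eq_intCombo 0 0 (-1) 0 1 (-1) 0 1 ?_,
    inI_of_eq_intCombo (-1) 0 0 0 0 0 1 (-1) ?_⟩ <;>
  · have := gold_mul_self
    ext <;>
      simp only [re_combo, imI_combo, imJ_combo, imK_combo, Quaternion.re_mul, Quaternion.imI_mul,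
        Quaternion.imJ_mul, Quaternion.imK_mul] <;>
      simp only [e₂, e₃, e₄] <;> grind

lemma inI_mul (hp : inI p) (hq : inI q) : inI (p * q) := by
  obtain ⟨c₁, c₂, c₃, c₄, h₁, h₂, h₃, h₄, rfl⟩ := hp
  obtain ⟨d₁, d₂, d₃, d₄, k₁, k₂, k₃, k₄, rfl⟩ := hq
  obtain ⟨he₂₂, he₂₃, he₂₄, he₃₂, he₃₃, he₃₄, he₄₂, he₄₃, he₄₄⟩ := inI_generator_mul
  obtain ⟨he₁, he₂, he₃, he₄⟩ := inI_generators
  rw [e₁_eq_one] at he₁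
  simp only [add_mul, mul_add, smul_mul_smul_comm, e₁_eq_one, one_mul, mul_one]
  repeat' apply inI_add
  all_goals exact inI_smul (ringO.mul_mem (by assumption) (by assumption)) (by assumption)

lemma inI_twist (hq : inI q) : inI (twist q) := by
  obtain ⟨c₁, c₂, c₃, c₄, h₁, h₂, h₃, h₄, rfl⟩ := hq
  rw [twist_combo (ringO_le_ringK h₁) (ringO_le_ringK h₂) (ringO_le_ringK h₃) (ringO_le_ringK h₄)]
  exact ⟨_, _, _, _, conjK_mem_ringO h₁, conjK_mem_ringO h₂,
    ringO.add_mem (conjK_mem_ringO h₃) (conjK_mem_ringO h₄), ringO.neg_mem (conjK_mem_ringO h₄),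
    rfl⟩

lemma nr_mem_ringO (hq : inI q) : nr q ∈ ringO := by
  obtain ⟨c₁, c₂, c₃, c₄, (h₁ : c₁ ∈ ringO), (h₂ : c₂ ∈ ringO), (h₃ : c₃ ∈ ringO),
    (h₄ : c₄ ∈ ringO), rfl⟩ := hq
  have hτ := gold_mem_ringO
  have h : nr (c₁ • e₁ + c₂ • e₂ + c₃ • e₃ + c₄ • e₄) = c₁ * c₁ + c₂ * c₂ + c₃ * c₃ + c₄ * c₄ +
      c₁ * c₃ + (1 - gold) * (c₁ * c₄) + c₂ * c₃ + gold * (c₂ * c₄) + c₃ * c₄ := by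
    rw [nr_eq_normSq, Quaternion.normSq_def', re_combo, imI_combo, imJ_combo, imK_combo]
    linear_combination (c₄ * c₄ / 2) * gold_mul_self
  rw [h]
  simp (maxDischargeDepth := 12) only [add_mem, sub_mem, mul_mem, one_mem, hτ, h₁, h₂, h₃, h₄]

end icosian

lemma Admissible.dvd_of_mul {s u : ℍ[ℝ]} {k m : ℕ} (hk : Admissible s k) (hs : inI s)
    (hu : inI u) (hm : Admissible (s * u) m) : k ∣ m := by
  obtain ⟨N, hN⟩ := exists_intCast_eq_mul_conjK (nr_mem_ringO hu)
  have h : (m : ℝ) ^ 2 = k ^ 2 * N := by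
    rw [← hm, ← hk, ← hN, nr_mul,
      conjK_mul (ringO_le_ringK (nr_mem_ringO hs)) (ringO_le_ringK (nr_mem_ringO hu))]
    ring
  have h' : ((k ^ 2 : ℕ) : ℤ) ∣ ((m ^ 2 : ℕ) : ℤ) := ⟨N, by exact_mod_cast h⟩
  exact (Nat.pow_dvd_pow_iff two_ne_zero).1 (Int.natCast_dvd_natCast.1 h')

lemma inI_generators_Lgrp : inI g₁ ∧ inI g₂ ∧ inI g₃ ∧ inI g₄ := by
  refine ⟨inI_of_eq_intCombo 1 0 0 0 0 0 0 0 ?_, inI_of_eq_intCombo (-1) 0 0 0 1 0 0 0 ?_,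
    inI_of_eq_intCombo 0 0 (-1) 0 0 0 0 0 ?_, inI_of_eq_intCombo (-1) 0 2 0 (-1) 1 1 (-2) ?_⟩ <;>
  · have := gold_mul_self
    ext <;> simp only [re_combo, imI_combo, imJ_combo, imK_combo] <;>
      simp only [g₁, g₂, g₃, g₄] <;> grind

lemma twist_generators_Lgrp : twist g₁ = g₁ ∧ twist g₂ = g₂ ∧ twist g₃ = g₃ ∧ twist g₄ = g₄ := by
  have hτ := gold_mem_ringK
  refine ⟨?_, ?_, ?_, ?_⟩ <;> ext <;> simp only [twist_re, twist_imI, twist_imJ, twist_imK] <;>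
    simp (maxDischargeDepth := 6) [g₁, g₂, g₃, g₄, conjK_div_two, conjK_neg, conjK_sub, conjK_gold,
      sub_mem, one_mem, hτ]

def twistFixedIcosians : AddSubgroup ℍ[ℝ] where
  carrier := {q | inI q ∧ twist q = q}
  add_mem' := fun ⟨hp, hp'⟩ ⟨hq, hq'⟩ => ⟨inI_add hp hq, by
    rw [twist_add (hasCoeffsInK_of_inI hp) (hasCoeffsInK_of_inI hq), hp', hq']⟩
  zero_mem' := ⟨inI_zero, twist_zero⟩
  neg_mem' := fun ⟨hq, hq'⟩ => ⟨inI_neg hq, by rw [twist_neg (hasCoeffsInK_of_inI hq), hq']⟩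

lemma intCoords_of_twist_eq_self {m₁ n₁ m₂ n₂ m₃ n₃ m₄ n₄ : ℤ}
    (h : twist ((m₁ + n₁ * gold) • e₁ + (m₂ + n₂ * gold) • e₂ + (m₃ + n₃ * gold) • e₃ +
      (m₄ + n₄ * gold) • e₄) = (m₁ + n₁ * gold) • e₁ + (m₂ + n₂ * gold) • e₂ +
        (m₃ + n₃ * gold) • e₃ + (m₄ + n₄ * gold) • e₄) :
    n₁ = 0 ∧ n₂ = 0 ∧ n₃ = m₄ ∧ n₄ = -2 * n₃ := by
  have hO (m n : ℤ) : (m + n * gold : ℝ) ∈ ringK := ringO_le_ringK ⟨m, n, rfl⟩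
  rw [twist_combo (hO _ _) (hO _ _) (hO _ _) (hO _ _)] at h
  obtain ⟨h₁, h₂, h₃, h₄⟩ := combo_injective h
  simp only [conjK_intCast_add_mul_gold] at h₁ h₂ h₃ h₄
  have k₁ := intCast_add_mul_gold_injective h₁
  have k₂ := intCast_add_mul_gold_injective h₂
  have k₃ := intCast_add_mul_gold_injective (m := m₃ + n₃ + (m₄ + n₄)) (n := -n₃ - n₄)
    (m' := m₃) (n' := n₃) (by push_cast at h₃ ⊢; linear_combination h₃)
  have k₄ := intCast_add_mul_gold_injective (m := -(m₄ + n₄)) (n := n₄) (m' := m₄) (n' := n₄)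
    (by push_cast at h₄ ⊢; linear_combination h₄)
  omega

lemma intCombo_mem_Lgrp (a b c d : ℤ) : a • g₁ + b • g₂ + c • g₃ + d • g₄ ∈ Lgrp := by
  have hg : ∀ g ∈ ({g₁, g₂, g₃, g₄} : Set ℍ[ℝ]), g ∈ Lgrp :=
    fun _ hg ↦ AddSubgroup.subset_closure hg
  exact add_mem (add_mem (add_mem (zsmul_mem (hg _ (by simp)) a) (zsmul_mem (hg _ (by simp)) b))
    (zsmul_mem (hg _ (by simp)) c)) (zsmul_mem (hg _ (by simp)) d)

lemma mem_Lgrp_of_twist_eq_self {q : ℍ[ℝ]} (hq : inI q) (h : twist q = q) : q ∈ Lgrp := by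
  obtain ⟨_, _, _, _, ⟨m₁, n₁, rfl⟩, ⟨m₂, n₂, rfl⟩, ⟨m₃, n₃, rfl⟩, ⟨m₄, n₄, rfl⟩, rfl⟩ := hq
  obtain ⟨rfl, rfl, rfl, rfl⟩ := intCoords_of_twist_eq_self h
  convert intCombo_mem_Lgrp (m₁ + m₃ + 2 * n₃) (m₃ + n₃) (2 * n₃ - m₂) n₃ using 1
  have := gold_mul_self
  simp only [← Int.cast_smul_eq_zsmul ℝ]
  ext <;> simp only [re_combo, imI_combo, imJ_combo, imK_combo] <;>
    simp only [Quaternion.re_add, Quaternion.imI_add, Quaternion.imJ_add, Quaternion.imK_add,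
      Quaternion.re_smul, Quaternion.imI_smul, Quaternion.imJ_smul, Quaternion.imK_smul,
      smul_eq_mul] <;>
    simp only [g₁, g₂, g₃, g₄] <;> grind

lemma Lgrp_eq_twistFixedIcosians : Lgrp = twistFixedIcosians := by
  refine le_antisymm ((AddSubgroup.closure_le _).2 ?_) fun q hq ↦
    mem_Lgrp_of_twist_eq_self hq.1 hq.2
  obtain ⟨i₁, i₂, i₃, i₄⟩ := inI_generators_Lgrp
  obtain ⟨t₁, t₂, t₃, t₄⟩ := twist_generators_Lgrp
  rintro _ (rfl | rfl | rfl | rfl)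
  exacts [⟨i₁, t₁⟩, ⟨i₂, t₂⟩, ⟨i₃, t₃⟩, ⟨i₄, t₄⟩]

lemma mul_mul_twist_mem_Lgrp {u x : ℍ[ℝ]} (hu : inI u) (hx : x ∈ Lgrp) :
    u * x * twist u ∈ Lgrp := by
  rw [Lgrp_eq_twistFixedIcosians] at hx ⊢
  obtain ⟨hxI, hxT⟩ := hx
  have hux := inI_mul hu hxI
  refine ⟨inI_mul hux (inI_twist hu), ?_⟩
  rw [twist_mul (hasCoeffsInK_of_inI hux) (hasCoeffsInK_of_inI (inI_twist hu)),
    twist_mul (hasCoeffsInK_of_inI hu) (hasCoeffsInK_of_inI hxI),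
    twist_twist (hasCoeffsInK_of_inI hu), hxT, mul_assoc]

lemma map_rotHom_mul_le {s u : ℍ[ℝ]} (hs : inI s) (hu : inI u) (c : ℝ) :
    Lgrp.map (rotHom (s * u) c) ≤ Lgrp.map (rotHom s c) := by
  rintro _ ⟨x, hx, rfl⟩
  refine ⟨u * x * twist u, mul_mul_twist_mem_Lgrp hu hx, ?_⟩
  simp only [rotHom, AddMonoidHom.coe_mk, ZeroHom.coe_mk,
    twist_mul (hasCoeffsInK_of_inI hs) (hasCoeffsInK_of_inI hu), mul_assoc]

theorem csl_eq_of_eq_right_ideal (r s : ℍ[ℝ]) (m k : ℕ)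
    (hr : PrimitiveIcosian r) (hs : PrimitiveIcosian s)
    (hrm : Admissible r m) (hsk : Admissible s k)
    (hideal : {y : ℍ[ℝ] | ∃ x : ℍ[ℝ], inI x ∧ y = r * x} =
      {y : ℍ[ℝ] | ∃ x : ℍ[ℝ], inI x ∧ y = s * x}) :
    m = k ∧
    Lgrp ⊓ Lgrp.map (rotHom r ((m : ℝ))⁻¹) = Lgrp ⊓ Lgrp.map (rotHom s ((k : ℝ))⁻¹) := by
  have hrs : r ∈ {y : ℍ[ℝ] | ∃ x : ℍ[ℝ], inI x ∧ y = s * x} :=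
    hideal ▸ ⟨1, inI_one, (mul_one r).symm⟩
  have hsr : s ∈ {y : ℍ[ℝ] | ∃ x : ℍ[ℝ], inI x ∧ y = r * x} :=
    hideal ▸ ⟨1, inI_one, (mul_one s).symm⟩
  obtain ⟨u, hu, hru⟩ := hrs
  obtain ⟨v, hv, hsv⟩ := hsr
  obtain rfl : m = k := Nat.dvd_antisymm (hrm.dvd_of_mul hr.1 hv (hsv ▸ hsk))
    (hsk.dvd_of_mul hs.1 hu (hru ▸ hrm))
  refine ⟨rfl, congrArg (Lgrp ⊓ ·) (le_antisymm ?_ ?_)⟩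
  · rw [hru]
    exact map_rotHom_mul_le hs.1 hu _
  · rw [hsv]
    exact map_rotHom_mul_le hr.1 hv _

end
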